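/- arXiv:1104.3839 — 2 statements merged into one kernel-verified Lean document; each statement's English description precedes it below -/
import Mathlib

section
/- Let μ > 0, α ≠ 0, N a positive integer, and 0 < ω ≤ α²/N². Then for every nonzero integer m with |m| ≤ N there is no a ∈ ℝ satisfying tanh(μ√ω a) · m = α/√ω. Consequently, under the condition ω ≤ α²/N² no stationary state of the NLS with delta vertex of strength α on the N-edge star graph exists. -/
lemma abs_tanh_lt_one' (x : ℝ) : |Real.tanh x| < 1 := by
  rw [Real.tanh_eq_sinh_div_cosh, abs_div, abs_of_pos (Real.cosh_pos x),
    div_lt_one (Real.cosh_pos x)]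
  nlinarith [Real.cosh_sq x, abs_nonneg (Real.sinh x), sq_abs (Real.sinh x), Real.cosh_pos x]

theorem stmt_2 (μ α : ℝ) (hμ : 0 < μ) (hα : α ≠ 0) (N : ℕ) (hN : 0 < N)
    (ω : ℝ) (hω : 0 < ω) (hω' : ω ≤ α ^ 2 / (N : ℝ) ^ 2) :
    -- under `ω ≤ α²/N²` the vertex equation has no solution for any admissible `m`,
    -- hence no stationary state of the NLS with delta vertex of strength `α` exists
    ∀ m : ℤ, m ≠ 0 → |m| ≤ (N : ℤ) →
      ¬ ∃ a : ℝ, Real.tanh (μ * Real.sqrt ω * a) * m = α / Real.sqrt ω := by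
  intro m hm hle ⟨a, ha⟩
  have hs : 0 < Real.sqrt ω := Real.sqrt_pos.mpr hω
  have hNpos : (0:ℝ) < (N:ℝ) := by exact_mod_cast hN
  have hsq : Real.sqrt ω ^ 2 = ω := Real.sq_sqrt hω.le
  -- N ≤ |α| / √ω
  have h1 : ω * (N:ℝ)^2 ≤ α^2 := (le_div_iff₀ (by positivity)).mp hω'
  have hNle : (N:ℝ) * Real.sqrt ω ≤ |α| := by
    nlinarith [sq_abs α, abs_nonneg α, hsq, Real.sqrt_nonneg ω]
  -- |m| ≥ 1 and |m| ≤ N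
  have hm1 : (1:ℝ) ≤ |(m:ℝ)| := by exact_mod_cast Int.one_le_abs hm
  have hmN : |(m:ℝ)| ≤ (N:ℝ) := by exact_mod_cast hle
  have htanh := abs_tanh_lt_one' (μ * Real.sqrt ω * a)
  have habs : |Real.tanh (μ * Real.sqrt ω * a) * m| < (N:ℝ) := by
    rw [abs_mul]
    calc |Real.tanh (μ * Real.sqrt ω * a)| * |(m:ℝ)| < 1 * |(m:ℝ)| := by
          exact mul_lt_mul_of_pos_right htanh (lt_of_lt_of_le one_pos hm1)
      _ = |(m:ℝ)| := one_mul _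
      _ ≤ (N:ℝ) := hmN
  have hrhs : (N:ℝ) ≤ |α / Real.sqrt ω| := by
    rw [abs_div, abs_of_pos hs, le_div_iff₀ hs]
    exact hNle
  rw [ha] at habs
  linarith
end

section
/- Let μ = 1 (cubic NLS), α ∈ ℝ with α ≠ 0, N a positive integer, j an integer with 0 ≤ j ≤ N and 2j ≠ N, sign(2j − N) = sign(α), and ω > α²/(2j−N)². Set aʲ = (1/√ω) arctanh(α/((2j−N)√ω)). Then j · ∫₀^∞ 2ω sech²(√ω(x − aʲ)) dx + (N − j) · ∫₀^∞ 2ω sech²(√ω(x + aʲ)) dx = 2N√ω + 2α. In particular the squared L² norm of the stationary state Ψʲ_ω is 2N√ω + 2α, independent of j. -/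
/-!
On the half-line, `2ω sech²(√ω (x - a))` is the derivative of `2√ω tanh(√ω (x - a))`, so
the mass of a bump or tail is `2√ω (1 ± tanh(√ω a))`. With `√ω aʲ = artanh y`, where
`y = α / ((2j - N)√ω)`, the `j` bumps and `N - j` tails contribute
`2√ω (N + (2j - N) y) = 2N√ω + 2α`.
-/

open MeasureTheory Set Filter

/-- The inverse hyperbolic tangent. -/
noncomputable def arctanh (x : ℝ) : ℝ := (1 / 2) * Real.log ((1 + x) / (1 - x))

namespace Real

theorem hasDerivAt_tanh (x : ℝ) : HasDerivAt tanh (1 / cosh x ^ 2) x := by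
  have h : HasDerivAt (fun y => sinh y / cosh y) _ x :=
    (hasDerivAt_sinh x).div (hasDerivAt_cosh x) (cosh_pos x).ne'
  rw [← cosh_sq_sub_sinh_sq x, show tanh = fun x => sinh x / cosh x from
    funext tanh_eq_sinh_div_cosh]
  exact h.congr_deriv (by ring)

@[fun_prop]
theorem continuous_tanh : Continuous tanh := by
  rw [show tanh = fun x => sinh x / cosh x from funext tanh_eq_sinh_div_cosh]
  exact continuous_sinh.div continuous_cosh fun x => (cosh_pos x).ne'

theorem tanh_eq_one_sub_two_div (x : ℝ) : tanh x = 1 - 2 / (exp (2 * x) + 1) := by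
  have : exp (2 * x) = exp x * exp x := by rw [two_mul, exp_add]
  rw [tanh_eq, exp_neg, this]
  field_simp
  ring

theorem tendsto_tanh_atTop : Tendsto tanh atTop (nhds 1) := by
  have hden : Tendsto (fun x : ℝ => exp (2 * x) + 1) atTop atTop :=
    tendsto_atTop_add_const_right _ _
      (tendsto_exp_atTop.comp (tendsto_id.const_mul_atTop two_pos))
  rw [show tanh = fun x => 1 - 2 / (exp (2 * x) + 1) from funext tanh_eq_one_sub_two_div]
  simpa using (tendsto_const_nhds (x := (1 : ℝ))).sub
    ((tendsto_const_nhds (x := (2 : ℝ))).div_atTop hden)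

end Real

theorem arctanh_eq_artanh {y : ℝ} (hy : y ∈ Ioo (-1) 1) : arctanh y = Real.artanh y :=
  (Real.artanh_eq_half_log (Ioo_subset_Icc_self hy)).symm

theorem integral_Ioi_two_mul_sech_sq {ω : ℝ} (hω : 0 < ω) (a : ℝ) :
    ∫ x in Ioi (0 : ℝ), 2 * ω * (1 / Real.cosh (Real.sqrt ω * (x - a))) ^ 2
      = 2 * Real.sqrt ω * (1 + Real.tanh (Real.sqrt ω * a)) := by
  set c := Real.sqrt ω
  have hc : 0 < c := Real.sqrt_pos.2 hω
  have hω_eq : ω = c ^ 2 := (Real.sq_sqrt hω.le).symm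
  have hinner : Tendsto (fun x : ℝ => c * (x - a)) atTop atTop :=
    (tendsto_atTop_add_const_right _ (-a) tendsto_id).const_mul_atTop hc
  have hderiv : ∀ x ∈ Ioi (0 : ℝ), HasDerivAt (fun x => 2 * c * Real.tanh (c * (x - a)))
      (2 * ω * (1 / Real.cosh (c * (x - a))) ^ 2) x := by
    intro x _
    have hlin : HasDerivAt (fun x : ℝ => c * (x - a)) c x := by
      simpa using ((hasDerivAt_id x).sub_const a).const_mul c
    refine (((Real.hasDerivAt_tanh _).comp x hlin).const_mul (2 * c)).congr_deriv ?_
    rw [hω_eq]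
    ring
  rw [integral_Ioi_of_hasDerivAt_of_nonneg (by fun_prop) hderiv (fun x _ => by positivity)
    ((Real.tendsto_tanh_atTop.comp hinner).const_mul (2 * c)), zero_sub, mul_neg,
    Real.tanh_neg]
  ring

theorem div_mul_sqrt_mem_Ioo {α d ω : ℝ} (hd : d ≠ 0) (hω : α ^ 2 / d ^ 2 < ω) :
    α / (d * Real.sqrt ω) ∈ Ioo (-1) 1 := by
  have hω0 : 0 < ω := lt_of_le_of_lt (by positivity) hω
  rw [mem_Ioo, ← abs_lt, ← sq_lt_one_iff_abs_lt_one, div_pow, mul_pow, Real.sq_sqrt hω0.le,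
    div_lt_one (by positivity)]
  rwa [div_lt_iff₀ (by positivity), mul_comm] at hω

theorem stmt_6_general (α : ℝ) (N : ℕ)
    (j : ℕ) (hjN : 2 * j ≠ N)
    (ω : ℝ) (hω : ω > α ^ 2 / (2 * (j : ℝ) - N) ^ 2)
    (aj : ℝ) (haj : aj = 1 / Real.sqrt ω * arctanh (α / ((2 * (j : ℝ) - N) * Real.sqrt ω))) :
    -- the squared L² norm (mass) of the cubic (μ = 1) stationary state `Ψʲ_ω`,
    -- with `j` bumps and `N − j` tails, equals `2N√ω + 2α`, independently of `j`
    (j : ℝ) * (∫ x in Ioi (0 : ℝ), 2 * ω * (1 / Real.cosh (Real.sqrt ω * (x - aj))) ^ 2)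
      + ((N : ℝ) - j) *
        (∫ x in Ioi (0 : ℝ), 2 * ω * (1 / Real.cosh (Real.sqrt ω * (x + aj))) ^ 2)
      = 2 * N * Real.sqrt ω + 2 * α := by
  have hd : 2 * (j : ℝ) - N ≠ 0 := sub_ne_zero.2 (by exact_mod_cast hjN)
  have hω0 : 0 < ω := lt_of_le_of_lt (by positivity) hω
  have hc : Real.sqrt ω ≠ 0 := (Real.sqrt_pos.2 hω0).ne'
  set y := α / ((2 * (j : ℝ) - N) * Real.sqrt ω)
  have hy : y ∈ Ioo (-1) 1 := div_mul_sqrt_mem_Ioo hd hω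
  have htanh : Real.tanh (Real.sqrt ω * aj) = y := by
    rw [haj, ← mul_assoc, mul_one_div_cancel hc, one_mul, arctanh_eq_artanh hy,
      Real.tanh_artanh hy]
  simp_rw [← sub_neg_eq_add _ aj, integral_Ioi_two_mul_sech_sq hω0, mul_neg, Real.tanh_neg,
    htanh]
  have hα : α = (2 * (j : ℝ) - N) * Real.sqrt ω * y := by
    simp only [y]
    field_simp
  rw [hα]
  ring

theorem stmt_6 (α : ℝ) (hα : α ≠ 0) (N : ℕ) (hN : 0 < N)
    (j : ℕ) (hj : j ≤ N) (hjN : 2 * j ≠ N)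
    (hsign : (0 < α ∧ (N : ℤ) < 2 * j) ∨ (α < 0 ∧ (2 * j : ℤ) < N))
    (ω : ℝ) (hω : ω > α ^ 2 / (2 * (j : ℝ) - N) ^ 2)
    (aj : ℝ) (haj : aj = 1 / Real.sqrt ω * arctanh (α / ((2 * (j : ℝ) - N) * Real.sqrt ω))) :
    -- the squared L² norm (mass) of the cubic (μ = 1) stationary state `Ψʲ_ω`,
    -- with `j` bumps and `N − j` tails, equals `2N√ω + 2α`, independently of `j`
    (j : ℝ) * (∫ x in Ioi (0 : ℝ), 2 * ω * (1 / Real.cosh (Real.sqrt ω * (x - aj))) ^ 2)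
      + ((N : ℝ) - j) *
        (∫ x in Ioi (0 : ℝ), 2 * ω * (1 / Real.cosh (Real.sqrt ω * (x + aj))) ^ 2)
      = 2 * N * Real.sqrt ω + 2 * α :=
  stmt_6_general α N j hjN ω hω aj haj
end
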